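/- Let C be a crystal framework in ℝ^d and let u be an almost periodic infinitesimal flex of C, viewed as an almost periodic map ℤ^d → ℂ^{d|V₀|}. Then the Bohr spectrum of u is contained in the RUM spectrum of C: for every ω ∈ 𝕋^d with [u, e_ω] ≠ 0 one has ω ∈ Ω(C). -/

import Mathlib

open Filter

noncomputable section

/-- The multi-power `z^k = z₁^{k₁} ⋯ z_d^{k_d}` for `z ∈ ℂ^d`, `k ∈ ℤ^d`. -/
def zpowVec {d : ℕ} (z : Fin d → ℂ) (k : Fin d → ℤ) : ℂ := ∏ j, z j ^ (k j)

/-- Membership in the `d`-torus `𝕋^d`. -/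
def OnTorus {d : ℕ} (z : Fin d → ℂ) : Prop := ∀ j, ‖z j‖ = 1

/-- A crystal framework in `ℝ^d`: a finite motif of vertices `V` placed by `p`,
a full-rank translation lattice generated by `a₁, …, a_d`, and a finite set of
motif edges `E` with endpoints `fst e = (v, l)` and `snd e = (w, m)` standing for
the joints `p(v, l)` and `p(w, m)`.  Joints are pairwise distinct and edge vectors
are nonzero. -/
structure CrystalFramework (d : ℕ) where
  V : Type
  fintypeV : Fintype V
  decV : DecidableEq V
  E : Type
  fintypeE : Fintype E
  p : V → Fin d → ℝ
  a : Fin d → Fin d → ℝ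
  indep : LinearIndependent ℝ a
  fst : E → V × (Fin d → ℤ)
  snd : E → V × (Fin d → ℤ)
  joint_injective : Function.Injective
    (fun vk : V × (Fin d → ℤ) =>
      (fun i => p vk.1 i + ∑ j, (vk.2 j : ℝ) * a j i : Fin d → ℝ))
  edge_nonzero : ∀ e : E,
    (fun i => p (fst e).1 i + ∑ j, ((fst e).2 j : ℝ) * a j i : Fin d → ℝ) ≠
    (fun i => p (snd e).1 i + ∑ j, ((snd e).2 j : ℝ) * a j i)

attribute [instance] CrystalFramework.fintypeV CrystalFramework.decV CrystalFramework.fintypeE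

namespace CrystalFramework

variable {d : ℕ} (C : CrystalFramework d)

/-- The joint `p(v, k) = p(v) + k₁a₁ + ⋯ + k_d a_d`. -/
def joint (v : C.V) (k : Fin d → ℤ) : Fin d → ℝ :=
  fun i => C.p v i + ∑ j, (k j : ℝ) * C.a j i

/-- The edge vector `p(e) = p(v, l) - p(w, m)` for the motif edge `e = ((v,l),(w,m))`. -/
def edgeVec (e : C.E) : Fin d → ℝ :=
  fun i => C.joint (C.fst e).1 (C.fst e).2 i - C.joint (C.snd e).1 (C.snd e).2 i

/-- A complex velocity field `u` is an infinitesimal flex: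
`p(e) ⋅ (u(v, l+k) - u(w, m+k)) = 0` for every motif edge and every `k ∈ ℤ^d`. -/
def IsFlex (u : C.V × (Fin d → ℤ) → Fin d → ℂ) : Prop :=
  ∀ (e : C.E) (k : Fin d → ℤ),
    ∑ i, (C.edgeVec e i : ℂ) *
      (u ((C.fst e).1, fun j => (C.fst e).2 j + k j) i -
       u ((C.snd e).1, fun j => (C.snd e).2 j + k j) i) = 0

/-- A real velocity field `u` is an infinitesimal flex. -/
def IsRealFlex (u : C.V × (Fin d → ℤ) → Fin d → ℝ) : Prop :=
  ∀ (e : C.E) (k : Fin d → ℤ),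
    ∑ i, C.edgeVec e i *
      (u ((C.fst e).1, fun j => (C.fst e).2 j + k j) i -
       u ((C.snd e).1, fun j => (C.snd e).2 j + k j) i) = 0

/-- A complex velocity field is trivial if the flex condition holds for every pair of joints. -/
def IsTrivial (u : C.V × (Fin d → ℤ) → Fin d → ℂ) : Prop :=
  ∀ (v w : C.V) (k k' : Fin d → ℤ),
    ∑ i, ((C.joint v k i - C.joint w k' i : ℝ) : ℂ) * (u (v, k) i - u (w, k') i) = 0

/-- A real velocity field is trivial if the flex condition holds for every pair of joints. -/
def IsRealTrivial (u : C.V × (Fin d → ℤ) → Fin d → ℝ) : Prop :=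
  ∀ (v w : C.V) (k k' : Fin d → ℤ),
    ∑ i, (C.joint v k i - C.joint w k' i) * (u (v, k) i - u (w, k') i) = 0

/-- A complex velocity field is strictly periodic if `u(v,k) = u(v,0)`. -/
def StrictlyPeriodic (u : C.V × (Fin d → ℤ) → Fin d → ℂ) : Prop :=
  ∀ (v : C.V) (k : Fin d → ℤ), u (v, k) = u (v, 0)

/-- A real velocity field is strictly periodic if `u(v,k) = u(v,0)`. -/
def StrictlyPeriodicReal (u : C.V × (Fin d → ℤ) → Fin d → ℝ) : Prop :=
  ∀ (v : C.V) (k : Fin d → ℤ), u (v, k) = u (v, 0)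

/-- The `ω`-phase-periodic velocity field `b ⊗ e_ω : (v,k) ↦ ω^k b(v)`. -/
def phaseField (ω : Fin d → ℂ) (b : C.V → Fin d → ℂ) :
    C.V × (Fin d → ℤ) → Fin d → ℂ :=
  fun vk i => zpowVec ω vk.2 * b vk.1 i

/-- The symbol function `Φ_C(z)`: the row of the motif edge `e = ((v,l),(w,m))` has
entries `z̄^l p(e)` in the columns of `v` and `-z̄^m p(e)` in the columns of `w`
(in particular entries `(z̄^l - z̄^m) p(e)` in the columns of `v` when `v = w`). -/
def symbol (z : Fin d → ℂ) : Matrix C.E (C.V × Fin d) ℂ :=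
  Matrix.of fun e xi =>
    (C.edgeVec e xi.2 : ℂ) *
      ((if xi.1 = (C.fst e).1 then
          zpowVec (fun j => (starRingEnd ℂ) (z j)) (C.fst e).2 else 0) -
       (if xi.1 = (C.snd e).1 then
          zpowVec (fun j => (starRingEnd ℂ) (z j)) (C.snd e).2 else 0))

/-- The RUM spectrum `Ω(C)`: the set of `ω ∈ 𝕋^d` admitting a nonzero
`ω`-phase-periodic infinitesimal flex. -/
def RUM : Set (Fin d → ℂ) :=
  {ω | OnTorus ω ∧ ∃ b : C.V → Fin d → ℂ, b ≠ 0 ∧ C.IsFlex (C.phaseField ω b)}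

end CrystalFramework

/-- The box `{k ∈ ℤ^d : |k_j| ≤ N for all j}`. -/
def box (d : ℕ) (N : ℕ) : Finset (Fin d → ℤ) :=
  Fintype.piFinset fun _ => Finset.Icc (-(N : ℤ)) (N : ℤ)

/-- The average `(2N+1)^{-d} ∑_{|k_j| ≤ N} f(k)`. -/
def boxAvg {d : ℕ} (f : (Fin d → ℤ) → ℂ) (N : ℕ) : ℂ :=
  (((2 * N + 1 : ℕ) : ℂ) ^ d)⁻¹ * ∑ k ∈ box d N, f k

/-- `f : ℤ^d → ℂ` has mean value `L`. -/
def HasMean {d : ℕ} (f : (Fin d → ℤ) → ℂ) (L : ℂ) : Prop :=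
  Tendsto (boxAvg f) atTop (nhds L)

/-- The mean pairing `[h, g] = lim_N (2N+1)^{-d} ∑_{|k_j| ≤ N} h(k) ⬝ conj (g(k))`,
computed componentwise, has value `L`. -/
def HasMeanPairing {d : ℕ} {ι : Type} [Fintype ι]
    (h : (Fin d → ℤ) → ι → ℂ) (g : (Fin d → ℤ) → ℂ) (L : ι → ℂ) : Prop :=
  ∀ i, HasMean (fun k => h k i * (starRingEnd ℂ) (g k)) (L i)

/-- The pure frequency sequence `e_ω(k) = ω^k`. -/
def eOmega {d : ℕ} (ω : Fin d → ℂ) : (Fin d → ℤ) → ℂ := fun k => zpowVec ω k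

/-- Bohr almost periodicity for a bounded `h : ℤ^d → ℂ^ι`: for every `ε > 0`
there is `R > 0` such that every closed Euclidean ball of radius `R` in `ℝ^d`
contains an `ε`-translation vector `l` of `h`, i.e. `‖R_l h - h‖_∞ < ε`. -/
def IsBohrAP {d : ℕ} {ι : Type} [Fintype ι] (h : (Fin d → ℤ) → ι → ℂ) : Prop :=
  (∃ M : ℝ, ∀ k i, ‖h k i‖ ≤ M) ∧
  ∀ ε > (0 : ℝ), ∃ R > (0 : ℝ), ∀ c : Fin d → ℝ, ∃ l : Fin d → ℤ,
    Real.sqrt (∑ j, ((l j : ℝ) - c j) ^ 2) ≤ R ∧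
    ∀ k i, ‖h (fun j => k j - l j) i - h k i‖ < ε


/-!
Multiplying the flex condition on the edge `e` translated by `k` by `conj (ω^k)` and averaging
over the boxes `|k_j| ≤ N`, the flex equations pass to the means. For a bounded sequence the box
means are invariant under translation by `l`, since the boxes of radius `N` and their translates
differ in `O(N^{d-1})` points; hence `[u(v, l + ·), e_ω] = ω^l [u(v, ·), e_ω]`, and the mean
pairing `L = [u, e_ω]` is the amplitude of an `ω`-phase-periodic flex.
-/

open scoped Finset Topology ComplexConjugate

section Mean

variable {d : ℕ}

lemma mem_box {N : ℕ} {k : Fin d → ℤ} : k ∈ box d N ↔ ∀ j, |k j| ≤ N := by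
  simp [box, abs_le]

lemma card_box (N : ℕ) : #(box d N) = (2 * N + 1) ^ d := by
  simp only [box, Fintype.card_piFinset, Int.card_Icc, Finset.prod_const, Finset.card_univ,
    Fintype.card_fin]
  congr 1
  omega

lemma norm_sum_sub_sum_le {α E : Type*} [DecidableEq α] [SeminormedAddCommGroup E]
    {f : α → E} {M : ℝ} (hM : ∀ x, ‖f x‖ ≤ M) {s t c : Finset α} (hcs : c ⊆ s) (hct : c ⊆ t) :
    ‖∑ x ∈ t, f x - ∑ x ∈ s, f x‖ ≤ M * ((#s - #c : ℝ) + (#t - #c : ℝ)) := by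
  have hsum : ∀ u : Finset α, ‖∑ x ∈ u, f x‖ ≤ M * #u := fun u => by
    simpa [mul_comm] using norm_sum_le_of_le u fun x _ => hM x
  rw [← Finset.sum_sdiff hcs, ← Finset.sum_sdiff hct, add_sub_add_right_eq_sub]
  calc ‖∑ x ∈ t \ c, f x - ∑ x ∈ s \ c, f x‖
      ≤ M * #(t \ c) + M * #(s \ c) := (norm_sub_le _ _).trans (add_le_add (hsum _) (hsum _))
    _ = M * ((#s - #c : ℝ) + (#t - #c : ℝ)) := by
      rw [Finset.card_sdiff_of_subset hcs, Finset.card_sdiff_of_subset hct,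
        Nat.cast_sub (Finset.card_le_card hcs), Nat.cast_sub (Finset.card_le_card hct)]
      ring

lemma norm_boxAvg_comp_add_sub_le {f : (Fin d → ℤ) → ℂ} {M : ℝ} (hM : ∀ k, ‖f k‖ ≤ M)
    {l : Fin d → ℤ} {r : ℕ} (hr : ∀ j, |l j| ≤ r) (N : ℕ) :
    ‖boxAvg (fun k => f (l + k)) (N + r) - boxAvg f (N + r)‖ ≤
      2 * M * (1 - (((2 * N + 1 : ℕ) : ℝ) / ((2 * (N + r) + 1 : ℕ) : ℝ)) ^ d) := by
  -- both boxes of radius `N + r` being compared contain the box of radius `N`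
  set shifted := (box d (N + r)).map (Equiv.addLeft l).toEmbedding
  have hinner : box d N ⊆ shifted := fun k hk => by
    rw [Finset.mem_map_equiv, mem_box]
    intro j
    have hlk := abs_add_le (-l j) (k j)
    rw [abs_neg] at hlk
    simp only [Equiv.addLeft_symm_apply, Pi.add_apply, Pi.neg_apply]
    push_cast
    linarith [hr j, mem_box.1 hk j]
  have hbox : box d N ⊆ box d (N + r) := fun k hk => mem_box.2 fun j => by
    have := mem_box.1 hk j
    push_cast
    linarith
  have hsum : ∑ k ∈ box d (N + r), f (l + k) = ∑ k ∈ shifted, f k := by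
    simp [shifted]
  have hcard : #shifted = #(box d (N + r)) := Finset.card_map _
  have key := norm_sum_sub_sum_le hM hbox hinner
  rw [hcard, card_box, card_box] at key
  simp only [boxAvg, ← mul_sub, hsum, norm_mul, norm_inv, norm_pow, Complex.norm_natCast]
  push_cast at key ⊢
  calc _ ≤ ((2 * (N + r) + 1 : ℝ) ^ d)⁻¹ *
        (M * (2 * ((2 * (N + r) + 1 : ℝ) ^ d - (2 * N + 1 : ℝ) ^ d))) :=
        mul_le_mul_of_nonneg_left (by linarith) (by positivity)
    _ = _ := by
      rw [div_pow]
      field_simp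

lemma HasMean.comp_add_left {f : (Fin d → ℤ) → ℂ} {L : ℂ} {M : ℝ} (hM : ∀ k, ‖f k‖ ≤ M)
    (hf : HasMean f L) (l : Fin d → ℤ) : HasMean (fun k => f (l + k)) L := by
  obtain ⟨r, hr⟩ : ∃ r : ℕ, ∀ j, |l j| ≤ r := ⟨∑ j, (l j).natAbs, fun j => by
    rw [Int.abs_eq_natAbs]
    exact_mod_cast Finset.single_le_sum (f := fun j => (l j).natAbs) (by simp) (Finset.mem_univ j)⟩
  have hodd : Tendsto (fun N : ℕ => 2 * N + 1) atTop atTop :=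
    tendsto_atTop_atTop.2 fun b => ⟨b, fun N hN => by omega⟩
  have hratio : Tendsto (fun N : ℕ => ((2 * N + 1 : ℕ) : ℝ) / ((2 * (N + r) + 1 : ℕ) : ℝ))
      atTop (𝓝 1) :=
    ((tendsto_natCast_div_add_atTop (2 * r : ℝ)).comp hodd).congr fun N => by
      simp only [Function.comp_apply]
      push_cast
      ring_nf
  have hbound := ((hratio.pow d).const_sub 1).const_mul (2 * M)
  rw [one_pow, sub_self, mul_zero] at hbound
  have hdiff := squeeze_zero_norm (norm_boxAvg_comp_add_sub_le hM hr) hbound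
  rw [HasMean, ← tendsto_add_atTop_iff_nat r]
  simpa using hdiff.add ((tendsto_add_atTop_iff_nat r).2 hf)

lemma HasMean.const_mul {f : (Fin d → ℤ) → ℂ} {L : ℂ} (hf : HasMean f L) (c : ℂ) :
    HasMean (fun k => c * f k) (c * L) :=
  (Tendsto.const_mul c hf).congr fun N => by simp only [boxAvg, Finset.mul_sum, mul_left_comm]

lemma HasMean.sub {f g : (Fin d → ℤ) → ℂ} {Lf Lg : ℂ} (hf : HasMean f Lf) (hg : HasMean g Lg) :
    HasMean (fun k => f k - g k) (Lf - Lg) :=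
  (Tendsto.sub hf hg).congr fun N => by simp only [boxAvg, Finset.sum_sub_distrib, mul_sub]

lemma HasMean.sum {ι : Type*} {s : Finset ι} {f : ι → (Fin d → ℤ) → ℂ} {L : ι → ℂ}
    (hf : ∀ i ∈ s, HasMean (f i) (L i)) : HasMean (fun k => ∑ i ∈ s, f i k) (∑ i ∈ s, L i) :=
  (tendsto_finsetSum s hf).congr fun N => by
    simp only [boxAvg, Finset.mul_sum]
    exact Finset.sum_comm

lemma HasMean.eq_zero {f : (Fin d → ℤ) → ℂ} {L : ℂ} (hf : HasMean f L) (h : ∀ k, f k = 0) :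
    L = 0 := by
  obtain rfl : f = 0 := funext h
  have h0 : boxAvg (0 : (Fin d → ℤ) → ℂ) = 0 := funext fun N => by simp [boxAvg]
  exact tendsto_nhds_unique hf (h0 ▸ tendsto_const_nhds)

end Mean

section Torus

variable {d : ℕ} {ω : Fin d → ℂ}

lemma zpowVec_add (hω : ∀ j, ω j ≠ 0) (k m : Fin d → ℤ) :
    zpowVec ω (k + m) = zpowVec ω k * zpowVec ω m := by
  simp only [zpowVec, Pi.add_apply, zpow_add₀ (hω _), Finset.prod_mul_distrib]

lemma OnTorus.ne_zero (hω : OnTorus ω) (j : Fin d) : ω j ≠ 0 :=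
  norm_ne_zero_iff.1 (by simp [hω j])

lemma OnTorus.norm_zpowVec (hω : OnTorus ω) (k : Fin d → ℤ) : ‖zpowVec ω k‖ = 1 := by
  simp [zpowVec, norm_prod, norm_zpow, hω _]

lemma OnTorus.conj_zpowVec_mul_self (hω : OnTorus ω) (k : Fin d → ℤ) :
    conj (zpowVec ω k) * zpowVec ω k = 1 := by
  rw [Complex.conj_mul', hω.norm_zpowVec]
  norm_num

lemma HasMean.comp_add_left_mul_conj_zpowVec {f : (Fin d → ℤ) → ℂ} {M : ℝ}
    (hM : ∀ k, ‖f k‖ ≤ M) (hω : OnTorus ω) {L : ℂ}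
    (hf : HasMean (fun k => f k * conj (zpowVec ω k)) L) (l : Fin d → ℤ) :
    HasMean (fun k => f (l + k) * conj (zpowVec ω k)) (zpowVec ω l * L) := by
  have hbdd : ∀ k, ‖f k * conj (zpowVec ω k)‖ ≤ M := by
    simpa [hω.norm_zpowVec] using hM
  convert (hf.comp_add_left hbdd l).const_mul (zpowVec ω l) using 2 with k
  rw [zpowVec_add hω.ne_zero, map_mul]
  linear_combination (-(f (l + k) * conj (zpowVec ω k))) * hω.conj_zpowVec_mul_self l

end Torus

namespace CrystalFramework

variable {d : ℕ} (C : CrystalFramework d)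

lemma isFlex_phaseField_iff {ω : Fin d → ℂ} (hω : OnTorus ω) {b : C.V → Fin d → ℂ} :
    C.IsFlex (C.phaseField ω b) ↔ ∀ e : C.E, ∑ i, (C.edgeVec e i : ℂ) *
      (zpowVec ω (C.fst e).2 * b (C.fst e).1 i - zpowVec ω (C.snd e).2 * b (C.snd e).1 i) = 0 := by
  have hfactor : ∀ (e : C.E) (k : Fin d → ℤ),
      ∑ i, (C.edgeVec e i : ℂ) *
        (C.phaseField ω b ((C.fst e).1, (C.fst e).2 + k) i -
          C.phaseField ω b ((C.snd e).1, (C.snd e).2 + k) i) =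
      zpowVec ω k * ∑ i, (C.edgeVec e i : ℂ) *
        (zpowVec ω (C.fst e).2 * b (C.fst e).1 i - zpowVec ω (C.snd e).2 * b (C.snd e).1 i) := by
    intro e k
    simp only [phaseField, zpowVec_add hω.ne_zero, Finset.mul_sum]
    exact Finset.sum_congr rfl fun i _ => by ring
  refine forall_congr' fun e => ⟨fun h => ?_, fun h k => (hfactor e k).trans ?_⟩
  · simpa [zpowVec] using (hfactor e 0).symm.trans (h 0)
  · rw [h, mul_zero]

variable {C}

theorem IsFlex.isFlex_phaseField_of_hasMeanPairing {u : C.V × (Fin d → ℤ) → Fin d → ℂ}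
    (hflex : C.IsFlex u) {M : ℝ} (hM : ∀ k (vi : C.V × Fin d), ‖u (vi.1, k) vi.2‖ ≤ M)
    {ω : Fin d → ℂ} (hω : OnTorus ω) {L : C.V × Fin d → ℂ}
    (hL : HasMeanPairing (fun k (vi : C.V × Fin d) => u (vi.1, k) vi.2) (eOmega ω) L) :
    C.IsFlex (C.phaseField ω fun v i => L (v, i)) := by
  have hshift : ∀ v l i, HasMean (fun k => u (v, fun j => l j + k j) i * conj (zpowVec ω k))
      (zpowVec ω l * L (v, i)) := fun v l i =>
    (hL (v, i)).comp_add_left_mul_conj_zpowVec (f := fun k => u (v, k) i) (hM · (v, i)) hω l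
  refine (C.isFlex_phaseField_iff hω).2 fun e => ?_
  have hmean := HasMean.sum (s := Finset.univ) fun i _ =>
    ((hshift (C.fst e).1 (C.fst e).2 i).sub (hshift (C.snd e).1 (C.snd e).2 i)).const_mul
      (C.edgeVec e i : ℂ)
  refine hmean.eq_zero fun k => ?_
  convert mul_eq_zero_of_left (hflex e k) (conj (zpowVec ω k)) using 1
  rw [Finset.sum_mul]
  exact Finset.sum_congr rfl fun i _ => by ring

end CrystalFramework

/-- The Bohr spectrum of an almost periodic infinitesimal flex `u`
of `C` is contained in the RUM spectrum: if `[u, e_ω] ≠ 0` then `ω ∈ Ω(C)`. -/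
theorem bohrSpectrum_subset_RUM {d : ℕ} (C : CrystalFramework d)
    (u : C.V × (Fin d → ℤ) → Fin d → ℂ)
    (hflex : C.IsFlex u)
    (hap : IsBohrAP (fun k (vi : C.V × Fin d) => u (vi.1, k) vi.2))
    (ω : Fin d → ℂ) (hω : OnTorus ω)
    (L : C.V × Fin d → ℂ) (hLne : L ≠ 0)
    (hL : HasMeanPairing (fun k (vi : C.V × Fin d) => u (vi.1, k) vi.2)
      (eOmega ω) L) :
    ω ∈ C.RUM := by
  obtain ⟨M, hM⟩ := hap.1
  refine ⟨hω, fun v i => L (v, i), fun hb => hLne ?_,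
    hflex.isFlex_phaseField_of_hasMeanPairing hM hω hL⟩
  exact funext fun vi => congrFun (congrFun hb vi.1) vi.2
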